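/- arXiv:1510.03695 — 3 statements merged into one kernel-verified Lean document; each statement's English description precedes it below -/
import Mathlib

section
/- Let R = (p,q) in ℝⁿ₊ and R' = (p',q') in ℝⁿ'₊ be normalized pairs (|p| = |q| = |p'| = |q'| = 1) with q and q' strictly positive entrywise, and let λ ∈ [0,1] and z ≥ 0. If (p,q) ≻ (λp', zq') holds then λ*_z(R→R') · z*_λ(R→R') ≤ λz; if (p,q) ≻ (λp', zq') fails then λ*_z(R→R') · z*_λ(R→R') ≥ λz. -/
open scoped BigOperators

/-- A test: a vector with entries in `[0,1]`. -/
def IsTest {ι : Type*} [Fintype ι] (t : ι → ℝ) : Prop := ∀ i, 0 ≤ t i ∧ t i ≤ 1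

/-- Dot product of two vectors. -/
def dot {ι : Type*} [Fintype ι] (t p : ι → ℝ) : ℝ := ∑ i, t i * p i

/-- `beta x p q` is the infimum of `t ⬝ q` over tests `t` with `t ⬝ p ≥ x`,
with value `⊤` (`+∞`) when no feasible test exists. -/
noncomputable def beta {ι : Type*} [Fintype ι] (x : ℝ) (p q : ι → ℝ) : EReal :=
  sInf {y : EReal | ∃ t : ι → ℝ, IsTest t ∧ x ≤ dot t p ∧ y = ((dot t q : ℝ) : EReal)}

/-- `alpha y p q` is the supremum of `t ⬝ p` over tests `t` with `t ⬝ q ≤ y`. -/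
noncomputable def alpha {ι : Type*} [Fintype ι] (y : ℝ) (p q : ι → ℝ) : ℝ :=
  sSup {x : ℝ | ∃ t : ι → ℝ, IsTest t ∧ dot t q ≤ y ∧ x = dot t p}

/-- A nonnegative matrix all of whose column sums are at most `1`. -/
def Substochastic {ι' ι : Type*} [Fintype ι'] [Fintype ι] (M : Matrix ι' ι ℝ) : Prop :=
  (∀ i j, 0 ≤ M i j) ∧ ∀ j, ∑ i, M i j ≤ 1

/-- A nonnegative matrix all of whose column sums equal `1`. -/
def Stochastic {ι' ι : Type*} [Fintype ι'] [Fintype ι] (M : Matrix ι' ι ℝ) : Prop :=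
  (∀ i j, 0 ≤ M i j) ∧ ∀ j, ∑ i, M i j = 1

/-- Relative submajorization: `(p,q) ≻ (p',q')`. -/
def SubMaj {ι ι' : Type*} [Fintype ι] [Fintype ι'] (p q : ι → ℝ) (p' q' : ι' → ℝ) : Prop :=
  ∃ M : Matrix ι' ι ℝ, Substochastic M ∧
    (∀ i, p' i ≤ M.mulVec p i) ∧ (∀ i, M.mulVec q i ≤ q' i)

/-- Relative majorization: `(p,q) ≽ (p',q')`. -/
def RelMaj {ι ι' : Type*} [Fintype ι] [Fintype ι'] (p q : ι → ℝ) (p' q' : ι' → ℝ) : Prop :=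
  ∃ M : Matrix ι' ι ℝ, Stochastic M ∧ M.mulVec p = p' ∧ M.mulVec q = q'

/-- Approximate relative submajorization: `(p,q) ≻_{ε,η} (p',q')`. -/
def ApproxSubMaj {ι ι' : Type*} [Fintype ι] [Fintype ι'] (ε η : ℝ)
    (p q : ι → ℝ) (p' q' : ι' → ℝ) : Prop :=
  ∃ (M : Matrix ι' ι ℝ) (a b : ι' → ℝ), Substochastic M ∧
    (∀ i, 0 ≤ a i) ∧ (∀ i, 0 ≤ b i) ∧ (∑ i, a i) ≤ ε ∧ (∑ i, b i) ≤ η ∧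
    (∀ i, p' i - a i ≤ M.mulVec p i) ∧ (∀ i, M.mulVec q i ≤ q' i + b i)

/-- Partial sum `∑_{j=1}^k v_{π(j)}` of the first `k` entries of `v` in the order given by `π`. -/
def psum {n : ℕ} (v : Fin n → ℝ) (π : Equiv.Perm (Fin n)) (k : ℕ) : ℝ :=
  ∑ j ∈ Finset.univ.filter (fun j : Fin n => (j : ℕ) < k), v (π j)

/-- `λ*_z(R→R')`: the largest `λ ∈ [0,1]` with `(p,q) ≻ (λ p', z q')`. -/
noncomputable def lambdaStar {ι ι' : Type*} [Fintype ι] [Fintype ι'] (z : ℝ)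
    (p q : ι → ℝ) (p' q' : ι' → ℝ) : ℝ :=
  sSup {lam : ℝ | 0 ≤ lam ∧ lam ≤ 1 ∧
    SubMaj p q (fun i => lam * p' i) (fun i => z * q' i)}

/-- `z*_λ(R→R')`: the smallest `z ≥ 0` with `(p,q) ≻ (λ p', z q')`. -/
noncomputable def zStar {ι ι' : Type*} [Fintype ι] [Fintype ι'] (lam : ℝ)
    (p q : ι → ℝ) (p' q' : ι' → ℝ) : ℝ :=
  sInf {z : ℝ | 0 ≤ z ∧ SubMaj p q (fun i => lam * p' i) (fun i => z * q' i)}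

/-- `ε*_z(R→R')`: the smallest error of the first kind. -/
noncomputable def epsStar {ι ι' : Type*} [Fintype ι] [Fintype ι'] (z : ℝ)
    (p q : ι → ℝ) (p' q' : ι' → ℝ) : ℝ :=
  sInf {ε : ℝ | 0 ≤ ε ∧ ApproxSubMaj ε 0 p q p' (fun i => z * q' i)}

/-- `η̂*_z(R→R')`: the smallest error of the second kind. -/
noncomputable def etaStar {ι ι' : Type*} [Fintype ι] [Fintype ι'] (z : ℝ)
    (p q : ι → ℝ) (p' q' : ι' → ℝ) : ℝ :=
  sInf {η : ℝ | 0 ≤ η ∧ ApproxSubMaj 0 η p q p' (fun i => z * q' i)}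

/-- Relative entropy `D(u,v) = Σ u_k ln(u_k/v_k)` (with `0 ln 0 = 0`). -/
noncomputable def relEnt {ι : Type*} [Fintype ι] (u v : ι → ℝ) : ℝ :=
  ∑ k, u k * Real.log (u k / v k)


/-
Feasibility of `(λ, z)` is preserved by shrinking both coordinates by a common factor `c ∈ [0,1]`
(compose the matrix with `c`), by lowering `λ` and by raising `z`. If `(λ, z)` is feasible and
`l > λ` is feasible with `z`, shrinking `(l, z)` by `λ / l` shows `z*_λ ≤ λz / l`; hence
`l · z*_λ ≤ λz` for every feasible `l`, and so `λ*_z z*_λ ≤ λz`. If `(λ, z)` is infeasible, every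
feasible `(λ, z₀)` has `z₀ > z`, and shrinking it by `z / z₀` shows `λz / z₀ ≤ λ*_z`; taking the
infimum over `z₀` (a nonempty set, as a rank-one matrix is feasible for large `z₀`) gives
`λz ≤ λ*_z z*_λ`.
-/

open Pointwise

section SubMaj

variable {ι ι' : Type*} [Fintype ι] [Fintype ι'] {p q : ι → ℝ} {p' q' : ι' → ℝ}

theorem SubMaj.smul {c : ℝ} (h : SubMaj p q p' q') (hc0 : 0 ≤ c) (hc1 : c ≤ 1) :
    SubMaj p q (c • p') (c • q') := by
  obtain ⟨M, ⟨hM0, hM1⟩, hMp, hMq⟩ := h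
  refine ⟨c • M, ⟨fun i j => mul_nonneg hc0 (hM0 i j), fun j => ?_⟩, fun i => ?_, fun i => ?_⟩
  · simp only [Matrix.smul_apply, smul_eq_mul, ← Finset.mul_sum]
    exact mul_le_one₀ hc1 (Finset.sum_nonneg fun i _ => hM0 i j) (hM1 j)
  · simpa only [Matrix.smul_mulVec, Pi.smul_apply, smul_eq_mul]
      using mul_le_mul_of_nonneg_left (hMp i) hc0
  · simpa only [Matrix.smul_mulVec, Pi.smul_apply, smul_eq_mul]
      using mul_le_mul_of_nonneg_left (hMq i) hc0

theorem SubMaj.mono {p'' q'' : ι' → ℝ} (h : SubMaj p q p' q') (hp : p'' ≤ p') (hq : q' ≤ q'') :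
    SubMaj p q p'' q'' := by
  obtain ⟨M, hM, hMp, hMq⟩ := h
  exact ⟨M, hM, fun i => (hp i).trans (hMp i), fun i => (hMq i).trans (hq i)⟩

theorem SubMaj.mul_mul {a b c : ℝ} (h : SubMaj p q (fun i => a * p' i) (fun i => b * q' i))
    (hc0 : 0 ≤ c) (hc1 : c ≤ 1) :
    SubMaj p q (fun i => c * a * p' i) (fun i => c * b * q' i) := by
  convert h.smul hc0 hc1 using 1 <;> ext i <;> simp only [Pi.smul_apply, smul_eq_mul, mul_assoc]

theorem exists_subMaj_mul_mul {lam : ℝ} (hp' : ∀ i, 0 ≤ p' i) (hq' : ∀ i, 0 < q' i)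
    (hp'1 : ∑ i, p' i ≤ 1) (hlam : lam ≤ ∑ i, p i) (hq : 0 ≤ ∑ i, q i) :
    ∃ z, 0 ≤ z ∧ SubMaj p q (fun i => lam * p' i) (fun i => z * q' i) := by
  set M : Matrix ι' ι ℝ := Matrix.of fun i _ => p' i
  have hM : ∀ v i, M.mulVec v i = (∑ j, v j) * p' i := fun v i => by
    simp [M, Matrix.mulVec, dotProduct, Finset.mul_sum, mul_comm]
  have hratio : ∀ i, p' i / q' i ≤ ∑ k, p' k / q' k := fun i =>
    Finset.single_le_sum (fun k _ => div_nonneg (hp' k) (hq' k).le) (Finset.mem_univ i)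
  refine ⟨(∑ j, q j) * ∑ k, p' k / q' k,
    mul_nonneg hq (Finset.sum_nonneg fun k _ => div_nonneg (hp' k) (hq' k).le),
    M, ⟨fun i _ => hp' i, fun _ => by simpa [M] using hp'1⟩, fun i => ?_, fun i => ?_⟩
  · rw [hM]
    exact mul_le_mul_of_nonneg_right hlam (hp' i)
  · rw [hM]
    calc (∑ j, q j) * p' i = (∑ j, q j) * (p' i / q' i) * q' i := by
          field_simp [(hq' i).ne']
      _ ≤ (∑ j, q j) * (∑ k, p' k / q' k) * q' i :=
          mul_le_mul_of_nonneg_right (mul_le_mul_of_nonneg_left (hratio i) hq) (hq' i).le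

end SubMaj

section Star

variable {ι ι' : Type*} [Fintype ι] [Fintype ι'] {p q : ι → ℝ} {p' q' : ι' → ℝ} {lam z : ℝ}

theorem lambdaStar_nonneg : 0 ≤ lambdaStar z p q p' q' :=
  Real.sSup_nonneg fun _ hl => hl.1

theorem le_lambdaStar {l : ℝ} (hl0 : 0 ≤ l) (hl1 : l ≤ 1)
    (h : SubMaj p q (fun i => l * p' i) (fun i => z * q' i)) : l ≤ lambdaStar z p q p' q' :=
  le_csSup ⟨1, fun _ hx => hx.2.1⟩ ⟨hl0, hl1, h⟩

theorem zStar_nonneg : 0 ≤ zStar lam p q p' q' :=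
  Real.sInf_nonneg fun _ hz => hz.1

theorem zStar_le (hz : 0 ≤ z) (h : SubMaj p q (fun i => lam * p' i) (fun i => z * q' i)) :
    zStar lam p q p' q' ≤ z :=
  csInf_le ⟨0, fun _ hx => hx.1⟩ ⟨hz, h⟩

theorem lambdaStar_mul_zStar_le (hlam0 : 0 ≤ lam) (hz : 0 ≤ z)
    (h : SubMaj p q (fun i => lam * p' i) (fun i => z * q' i)) :
    lambdaStar z p q p' q' * zStar lam p q p' q' ≤ lam * z := by
  rw [mul_comm, ← smul_eq_mul, lambdaStar, ← Real.sSup_smul_of_nonneg zStar_nonneg]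
  refine Real.sSup_le ?_ (mul_nonneg hlam0 hz)
  rintro _ ⟨l, ⟨hl0, -, hl⟩, rfl⟩
  change zStar lam p q p' q' * l ≤ lam * z
  rcases le_or_gt l lam with hle | hlt
  · rw [mul_comm]
    exact mul_le_mul hle (zStar_le hz h) zStar_nonneg hlam0
  · have hlpos : 0 < l := hlam0.trans_lt hlt
    have hshrunk := hl.mul_mul (div_nonneg hlam0 hlpos.le) ((div_le_one hlpos).mpr hlt.le)
    rw [div_mul_cancel₀ lam hlpos.ne'] at hshrunk
    calc zStar lam p q p' q' * l ≤ lam / l * z * l := by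
          gcongr
          exact zStar_le (mul_nonneg (div_nonneg hlam0 hlpos.le) hz) hshrunk
      _ = lam * z := by field_simp

theorem le_lambdaStar_mul_zStar (hq' : ∀ i, 0 ≤ q' i) (hlam0 : 0 ≤ lam) (hlam1 : lam ≤ 1)
    (hz : 0 ≤ z) (h : ¬ SubMaj p q (fun i => lam * p' i) (fun i => z * q' i))
    (hfeas : ∃ z₀, 0 ≤ z₀ ∧ SubMaj p q (fun i => lam * p' i) (fun i => z₀ * q' i)) :
    lam * z ≤ lambdaStar z p q p' q' * zStar lam p q p' q' := by
  change lam * z ≤ lambdaStar z p q p' q' • sInf _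
  rw [← Real.sInf_smul_of_nonneg lambdaStar_nonneg]
  obtain ⟨z₁, hz₁⟩ := hfeas
  refine le_csInf ⟨_, Set.smul_mem_smul_set hz₁⟩ ?_
  rintro _ ⟨z₀, ⟨-, hz₀⟩, rfl⟩
  change lam * z ≤ lambdaStar z p q p' q' * z₀
  have hlt : z < z₀ := by
    by_contra! hle
    exact h (hz₀.mono le_rfl fun i => mul_le_mul_of_nonneg_right hle (hq' i))
  have hz₀pos : 0 < z₀ := hz.trans_lt hlt
  have hshrunk := hz₀.mul_mul (div_nonneg hz hz₀pos.le) ((div_le_one hz₀pos).mpr hlt.le)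
  rw [div_mul_cancel₀ z hz₀pos.ne'] at hshrunk
  calc lam * z = z / z₀ * lam * z₀ := by field_simp
    _ ≤ lambdaStar z p q p' q' * z₀ := by
        gcongr
        exact le_lambdaStar (mul_nonneg (div_nonneg hz hz₀pos.le) hlam0)
          (mul_le_one₀ ((div_le_one hz₀pos).mpr hlt.le) hlam0 hlam1) hshrunk

end Star

theorem stmt_17_general {n n' : ℕ} (p q : Fin n → ℝ) (p' q' : Fin n' → ℝ)
    (hp' : ∀ i, 0 ≤ p' i) (hq' : ∀ i, 0 < q' i)
    (hpn : ∑ i, p i = 1) (hqn : ∑ i, q i = 1)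
    (hpn' : ∑ i, p' i = 1)
    (lam z : ℝ) (hlam0 : 0 ≤ lam) (hlam1 : lam ≤ 1) (hz : 0 ≤ z) :
    (SubMaj p q (fun i => lam * p' i) (fun i => z * q' i) →
      lambdaStar z p q p' q' * zStar lam p q p' q' ≤ lam * z) ∧
    (¬ SubMaj p q (fun i => lam * p' i) (fun i => z * q' i) →
      lam * z ≤ lambdaStar z p q p' q' * zStar lam p q p' q') :=
  ⟨lambdaStar_mul_zStar_le hlam0 hz,
    fun h => le_lambdaStar_mul_zStar (fun i => (hq' i).le) hlam0 hlam1 hz h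
      (exists_subMaj_mul_mul hp' hq' hpn'.le (hpn ▸ hlam1) (hqn ▸ zero_le_one))⟩

/-- Bootstrapping from a feasible or infeasible pair `(λ,z)`:
feasibility gives `λ*_z z*_λ ≤ λz`, infeasibility gives `λ*_z z*_λ ≥ λz`. -/
theorem stmt_17 {n n' : ℕ} (p q : Fin n → ℝ) (p' q' : Fin n' → ℝ)
    (hp : ∀ i, 0 ≤ p i) (hq : ∀ i, 0 < q i)
    (hp' : ∀ i, 0 ≤ p' i) (hq' : ∀ i, 0 < q' i)
    (hpn : ∑ i, p i = 1) (hqn : ∑ i, q i = 1)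
    (hpn' : ∑ i, p' i = 1) (hqn' : ∑ i, q' i = 1)
    (lam z : ℝ) (hlam0 : 0 ≤ lam) (hlam1 : lam ≤ 1) (hz : 0 ≤ z) :
    (SubMaj p q (fun i => lam * p' i) (fun i => z * q' i) →
      lambdaStar z p q p' q' * zStar lam p q p' q' ≤ lam * z) ∧
    (¬ SubMaj p q (fun i => lam * p' i) (fun i => z * q' i) →
      lam * z ≤ lambdaStar z p q p' q' * zStar lam p q p' q') :=
  stmt_17_general p q p' q' hp' hq' hpn hqn hpn' lam z hlam0 hlam1 hz
end

section
/- Let R = (p,q) in ℝⁿ₊ and R' = (p',q') in ℝⁿ'₊ be normalized pairs (|p| = |q| = |p'| = |q'| = 1) with q and q' strictly positive entrywise. Then: (i) for all λ, λ' ∈ [0,1], z*_λ(R→R') · z*_{λ'}(R'→R) ≥ λλ'; (ii) for all λ ∈ [0,1] and z ≥ 0, λ · λ*_z(R'→R) ≤ z · z*_λ(R→R'). -/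
open scoped BigOperators

section Aux

variable {ι ι' ι'' : Type*} [Fintype ι] [Fintype ι'] [Fintype ι'']

lemma aux_substochastic_mul {A : Matrix ι'' ι' ℝ} {B : Matrix ι' ι ℝ}
    (hA : Substochastic A) (hB : Substochastic B) : Substochastic (A * B) := by
  constructor
  · intro i j
    rw [Matrix.mul_apply]
    exact Finset.sum_nonneg fun k _ => mul_nonneg (hA.1 i k) (hB.1 k j)
  · intro j
    have : ∑ i, (A * B) i j = ∑ k, (∑ i, A i k) * B k j := by
      simp only [Matrix.mul_apply, Finset.sum_mul]
      rw [Finset.sum_comm]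
    rw [this]
    calc ∑ k, (∑ i, A i k) * B k j ≤ ∑ k, 1 * B k j :=
          Finset.sum_le_sum fun k _ => mul_le_mul_of_nonneg_right (hA.2 k) (hB.1 k j)
      _ = ∑ k, B k j := by simp
      _ ≤ 1 := hB.2 j

lemma aux_mulVec_mono (M : Matrix ι' ι ℝ) (hM : ∀ i j, 0 ≤ M i j) {u v : ι → ℝ}
    (h : ∀ j, u j ≤ v j) (i : ι') : M.mulVec u i ≤ M.mulVec v i := by
  simp only [Matrix.mulVec, dotProduct, Matrix.of_apply]
  exact Finset.sum_le_sum fun j _ => mul_le_mul_of_nonneg_left (h j) (hM i j)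

lemma aux_subMaj_trans {p q : ι → ℝ} {a b : ι' → ℝ} {c d : ι'' → ℝ}
    (h1 : SubMaj p q a b) (h2 : SubMaj a b c d) : SubMaj p q c d := by
  obtain ⟨M, hM, hMp, hMq⟩ := h1
  obtain ⟨M', hM', hM'a, hM'b⟩ := h2
  refine ⟨M' * M, aux_substochastic_mul hM' hM, fun i => ?_, fun i => ?_⟩
  · rw [← Matrix.mulVec_mulVec]
    exact le_trans (hM'a i) (aux_mulVec_mono M' hM'.1 hMp i)
  · rw [← Matrix.mulVec_mulVec]
    exact le_trans (aux_mulVec_mono M' hM'.1 hMq i) (hM'b i)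

lemma aux_subMaj_scale {p : ι → ℝ} {q : ι → ℝ} {a b : ι' → ℝ} (h : SubMaj p q a b)
    {c d : ℝ} (hc : 0 ≤ c) (hd : 0 ≤ d) :
    SubMaj (fun i => c * p i) (fun i => d * q i) (fun i => c * a i) (fun i => d * b i) := by
  obtain ⟨M, hM, h1, h2⟩ := h
  have key : ∀ (e : ℝ) (v : ι → ℝ) (i : ι'),
      M.mulVec (fun j => e * v j) i = e * M.mulVec v i := by
    intro e v i
    simp only [Matrix.mulVec, dotProduct, Finset.mul_sum]
    exact Finset.sum_congr rfl fun j _ => by ring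
  refine ⟨M, hM, fun i => ?_, fun i => ?_⟩
  · rw [key]; exact mul_le_mul_of_nonneg_left (h1 i) hc
  · rw [key]; exact mul_le_mul_of_nonneg_left (h2 i) hd

/-- Key lemma: `(p,q) ≻ (μp, wq)` with `p` a probability vector and `q > 0` forces `μ ≤ w`. -/
lemma aux_key {n : ℕ} {p q : Fin n → ℝ} (hp : ∀ i, 0 ≤ p i) (hq : ∀ i, 0 < q i)
    (hpn : ∑ i, p i = 1) {μ w : ℝ}
    (h : SubMaj p q (fun i => μ * p i) (fun i => w * q i)) : μ ≤ w := by
  obtain ⟨N, hN, h1, h2⟩ := h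
  have hjpos : ∃ j, 0 < p j := by
    by_contra hc
    push_neg at hc
    have : ∑ i, p i = 0 := Finset.sum_eq_zero fun i _ => le_antisymm (hc i) (hp i)
    rw [this] at hpn; norm_num at hpn
  obtain ⟨j1, hj1⟩ := hjpos
  have hne : (Finset.univ : Finset (Fin n)).Nonempty := ⟨j1, Finset.mem_univ _⟩
  obtain ⟨j0, -, hj0⟩ := Finset.exists_max_image Finset.univ (fun j => p j / q j) hne
  set s : ℝ := p j0 / q j0 with hs
  have hspos : 0 < s := lt_of_lt_of_le (div_pos hj1 (hq j1)) (hj0 j1 (Finset.mem_univ _))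
  have hple : ∀ j, p j ≤ s * q j := fun j =>
    (div_le_iff₀ (hq j)).mp (hj0 j (Finset.mem_univ _))
  have hNp : N.mulVec p j0 ≤ s * N.mulVec q j0 := by
    simp only [Matrix.mulVec, dotProduct, Finset.mul_sum]
    refine Finset.sum_le_sum fun k _ => ?_
    calc N j0 k * p k ≤ N j0 k * (s * q k) :=
          mul_le_mul_of_nonneg_left (hple k) (hN.1 j0 k)
      _ = s * (N j0 k * q k) := by ring
  have hpj0 : p j0 = s * q j0 := by
    rw [hs, div_mul_cancel₀ _ (ne_of_gt (hq j0))]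
  have hchain : μ * (s * q j0) ≤ w * (s * q j0) := by
    calc μ * (s * q j0) = μ * p j0 := by rw [hpj0]
      _ ≤ N.mulVec p j0 := h1 j0
      _ ≤ s * N.mulVec q j0 := hNp
      _ ≤ s * (w * q j0) := mul_le_mul_of_nonneg_left (h2 j0) (le_of_lt hspos)
      _ = w * (s * q j0) := by ring
  exact le_of_mul_le_mul_right hchain (mul_pos hspos (hq j0))

lemma aux_prod_bound {S S' : Set ℝ} (hS : S.Nonempty) (hS' : S'.Nonempty)
    (hS0 : ∀ z ∈ S, 0 ≤ z) (hS0' : ∀ z ∈ S', 0 ≤ z) {c : ℝ}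
    (h : ∀ z ∈ S, ∀ z' ∈ S', c ≤ z * z') : c ≤ sInf S * sInf S' := by
  have hbdd : BddBelow S := ⟨0, hS0⟩
  have hbdd' : BddBelow S' := ⟨0, hS0'⟩
  have hI : 0 ≤ sInf S := le_csInf hS hS0
  have hI' : 0 ≤ sInf S' := le_csInf hS' hS0'
  have step1 : ∀ z ∈ S, c ≤ z * sInf S' := by
    intro z hz
    rcases eq_or_lt_of_le (hS0 z hz) with hz0 | hz0
    · obtain ⟨z', hz'⟩ := hS'
      calc c ≤ z * z' := h z hz z' hz'
        _ = 0 := by rw [← hz0]; ring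
        _ = z * sInf S' := by rw [← hz0]; ring
    · have : c / z ≤ sInf S' := le_csInf hS' fun z' hz' =>
        (div_le_iff₀' hz0).mpr (h z hz z' hz')
      calc c = z * (c / z) := by field_simp
        _ ≤ z * sInf S' := mul_le_mul_of_nonneg_left this (le_of_lt hz0)
  rcases eq_or_lt_of_le hI' with hI0 | hI0
  · obtain ⟨z, hz⟩ := hS
    calc c ≤ z * sInf S' := step1 z hz
      _ = 0 := by rw [← hI0]; ring
      _ = sInf S * sInf S' := by rw [← hI0]; ring
  · have : c / sInf S' ≤ sInf S := le_csInf hS fun z hz =>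
      (div_le_iff₀ hI0).mpr (step1 z hz)
    calc c = (c / sInf S') * sInf S' := by field_simp
      _ ≤ sInf S * sInf S' := mul_le_mul_of_nonneg_right this (le_of_lt hI0)

lemma aux_sup_inf_bound {L S : Set ℝ} (hL : L.Nonempty) (hS : S.Nonempty)
    (hS0 : ∀ w ∈ S, 0 ≤ w) {lam z : ℝ} (hlam : 0 ≤ lam) (hz : 0 ≤ z)
    (h : ∀ μ ∈ L, ∀ w ∈ S, lam * μ ≤ z * w) : lam * sSup L ≤ z * sInf S := by
  have hbdd : BddBelow S := ⟨0, hS0⟩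
  have step1 : ∀ w ∈ S, lam * sSup L ≤ z * w := by
    intro w hw
    rcases eq_or_lt_of_le hlam with hl0 | hl0
    · calc lam * sSup L = 0 := by rw [← hl0]; ring
        _ ≤ z * w := mul_nonneg hz (hS0 w hw)
    · have : sSup L ≤ z * w / lam := csSup_le hL fun μ hμ =>
        (le_div_iff₀' hl0).mpr (h μ hμ w hw)
      calc lam * sSup L ≤ lam * (z * w / lam) :=
            mul_le_mul_of_nonneg_left this (le_of_lt hl0)
        _ = z * w := by field_simp
  rcases eq_or_lt_of_le hz with hz0 | hz0
  · obtain ⟨w, hw⟩ := hS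
    calc lam * sSup L ≤ z * w := step1 w hw
      _ = 0 := by rw [← hz0]; ring
      _ = z * sInf S := by rw [← hz0]; ring
  · have : lam * sSup L / z ≤ sInf S := le_csInf hS fun w hw =>
      (div_le_iff₀' hz0).mpr (step1 w hw)
    calc lam * sSup L = z * (lam * sSup L / z) := by field_simp
      _ ≤ z * sInf S := mul_le_mul_of_nonneg_left this (le_of_lt hz0)

/-- Existence of a feasible `z`: the rank-one substochastic map works. -/
lemma aux_feasible {n n' : ℕ} (p q : Fin n → ℝ) (p' q' : Fin n' → ℝ)
    (hp' : ∀ i, 0 ≤ p' i) (hq' : ∀ i, 0 < q' i)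
    (hpn : ∑ i, p i = 1) (hqn : ∑ i, q i = 1) (hpn' : ∑ i, p' i = 1)
    {lam : ℝ} (h0 : 0 ≤ lam) (h1 : lam ≤ 1) :
    ∃ z, 0 ≤ z ∧ SubMaj p q (fun i => lam * p' i) (fun i => z * q' i) := by
  set z : ℝ := ∑ i, p' i / q' i with hz
  have hz0 : 0 ≤ z := Finset.sum_nonneg fun i _ => div_nonneg (hp' i) (le_of_lt (hq' i))
  refine ⟨z, hz0, Matrix.of (fun i j => lam * p' i), ⟨⟨fun i j => mul_nonneg h0 (hp' i), fun j => ?_⟩,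
    fun i => ?_, fun i => ?_⟩⟩
  · show ∑ i, lam * p' i ≤ 1
    rw [← Finset.mul_sum, hpn', mul_one]
    exact h1
  · have hmv : ((Matrix.of fun (i : Fin n') (j : Fin n) => lam * p' i).mulVec p) i = lam * p' i := by
      simp only [Matrix.mulVec, dotProduct, Matrix.of_apply]
      rw [← Finset.mul_sum, hpn, mul_one]
    rw [hmv]
  · have hmv : ((Matrix.of fun (i : Fin n') (j : Fin n) => lam * p' i).mulVec q) i = lam * p' i := by
      simp only [Matrix.mulVec, dotProduct, Matrix.of_apply]
      rw [← Finset.mul_sum, hqn, mul_one]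
    rw [hmv]
    calc lam * p' i ≤ 1 * p' i := mul_le_mul_of_nonneg_right h1 (hp' i)
      _ = (p' i / q' i) * q' i := by rw [one_mul, div_mul_cancel₀ _ (ne_of_gt (hq' i))]
      _ ≤ z * q' i := by
          refine mul_le_mul_of_nonneg_right ?_ (le_of_lt (hq' i))
          exact Finset.single_le_sum (f := fun k => p' k / q' k)
            (fun k _ => div_nonneg (hp' k) (le_of_lt (hq' k))) (Finset.mem_univ i)

end Aux

/-- Reversibility bounds: `z*_λ(R→R') z*_{λ'}(R'→R) ≥ λλ'` and
`λ λ*_z(R'→R) ≤ z z*_λ(R→R')`. -/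
theorem stmt_18 {n n' : ℕ} (p q : Fin n → ℝ) (p' q' : Fin n' → ℝ)
    (hp : ∀ i, 0 ≤ p i) (hq : ∀ i, 0 < q i)
    (hp' : ∀ i, 0 ≤ p' i) (hq' : ∀ i, 0 < q' i)
    (hpn : ∑ i, p i = 1) (hqn : ∑ i, q i = 1)
    (hpn' : ∑ i, p' i = 1) (hqn' : ∑ i, q' i = 1) :
    (∀ lam lam' : ℝ, 0 ≤ lam → lam ≤ 1 → 0 ≤ lam' → lam' ≤ 1 →
        lam * lam' ≤ zStar lam p q p' q' * zStar lam' p' q' p q) ∧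
    (∀ lam z : ℝ, 0 ≤ lam → lam ≤ 1 → 0 ≤ z →
        lam * lambdaStar z p' q' p q ≤ z * zStar lam p q p' q') := by
  constructor
  · intro lam lam' h0 h1 h0' h1'
    unfold zStar
    apply aux_prod_bound
    · exact aux_feasible p q p' q' hp' hq' hpn hqn hpn' h0 h1
    · exact aux_feasible p' q' p q hp hq hpn' hqn' hpn h0' h1'
    · intro x hx; exact hx.1
    · intro x hx; exact hx.1
    · intro zz hz zz' hz'
      have h2 := aux_subMaj_scale hz'.2 h0 hz.1
      have h3 := aux_subMaj_trans hz.2 h2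
      have h4 : SubMaj p q (fun i => (lam * lam') * p i) (fun i => (zz * zz') * q i) := by
        simp only [mul_assoc]; exact h3
      exact aux_key hp hq hpn h4
  · intro lam z h0 h1 hz
    unfold lambdaStar zStar
    have hL : (0:ℝ) ∈ {μ : ℝ | 0 ≤ μ ∧ μ ≤ 1 ∧
        SubMaj p' q' (fun i => μ * p i) (fun i => z * q i)} := by
      refine ⟨le_refl 0, zero_le_one, (0 : Matrix (Fin n) (Fin n') ℝ),
        ⟨fun i j => le_refl 0, fun j => by simp⟩, fun i => ?_, fun i => ?_⟩
      · simp [Matrix.zero_mulVec]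
      · simp only [Matrix.zero_mulVec, Pi.zero_apply]
        exact mul_nonneg hz (le_of_lt (hq i))
    apply aux_sup_inf_bound ⟨0, hL⟩
      (aux_feasible p q p' q' hp' hq' hpn hqn hpn' h0 h1) (fun w hw => hw.1) h0 hz
    intro μ hμ w hw
    have h2 := aux_subMaj_scale hμ.2.2 h0 hw.1
    have h3 := aux_subMaj_trans hw.2 h2
    have h4 : SubMaj p q (fun i => (lam * μ) * p i) (fun i => (w * z) * q i) := by
      simp only [mul_assoc]; exact h3
    exact (aux_key hp hq hpn h4).trans_eq (mul_comm w z)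
end

section
/- Let p ∈ ℝⁿ₊ be a probability vector (Σ p_k = 1), let q ∈ ℝⁿ be strictly positive entrywise, and let T be an n'×n stochastic matrix (nonnegative entries, each column sum equal to 1) such that Tq is strictly positive entrywise. Then there exists an n×n' stochastic matrix T̂ (depending only on T and q), namely the Petz transpose map with entries T̂_{kj} = q_k T_{jk} / (Tq)_j, such that T̂(Tq) = q and D(p,q) − D(Tp, Tq) ≥ D(p, T̂(Tp)), where D(u,v) = Σ_k u_k ln(u_k / v_k) is the relative entropy (with the convention 0·ln 0 = 0). -/
open scoped BigOperators

/-- The Petz transpose map `T̂` of a stochastic map `T` with respect to `q` is stochastic,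
recovers `q` from `Tq`, and the decrease of relative entropy under `T` bounds the
relative entropy between `p` and its recovery `T̂(Tp)`. -/
theorem stmt_19 {n n' : ℕ} (p q : Fin n → ℝ)
    (hp : ∀ k, 0 ≤ p k) (hpn : ∑ k, p k = 1) (hq : ∀ k, 0 < q k)
    (T : Matrix (Fin n') (Fin n) ℝ) (hT : Stochastic T)
    (hTq : ∀ j, 0 < T.mulVec q j) :
    Stochastic (Matrix.of fun k j => q k * T j k / T.mulVec q j) ∧
    (Matrix.of fun k j => q k * T j k / T.mulVec q j).mulVec (T.mulVec q) = q ∧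
    relEnt p (Matrix.of (fun k j => q k * T j k / T.mulVec q j)
        |>.mulVec (T.mulVec p))
      ≤ relEnt p q - relEnt (T.mulVec p) (T.mulVec q) := by
  obtain ⟨hTnn, hTcol⟩ := hT
  have hTqv : ∀ j, T.mulVec q j = ∑ k, T j k * q k := by
    intro j; rfl
  have hTpv : ∀ j, T.mulVec p j = ∑ k, T j k * p k := by
    intro j; rfl
  have hTp_nonneg : ∀ j, 0 ≤ T.mulVec p j := by
    intro j; rw [hTpv]
    exact Finset.sum_nonneg fun k _ => mul_nonneg (hTnn j k) (hp k)
  -- Part 1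
  have part1 : Stochastic (Matrix.of fun k j => q k * T j k / T.mulVec q j) := by
    constructor
    · intro k j
      exact div_nonneg (mul_nonneg (hq k).le (hTnn j k)) (hTq j).le
    · intro j
      simp only [Matrix.of_apply]
      rw [← Finset.sum_div]
      rw [div_eq_one_iff_eq (hTq j).ne', hTqv]
      exact Finset.sum_congr rfl fun k _ => mul_comm (q k) (T j k)
  have happly : ∀ (M : Matrix (Fin n) (Fin n') ℝ) (v : Fin n' → ℝ) (k : Fin n),
      M.mulVec v k = ∑ j, M k j * v j := fun _ _ _ => rfl
  -- Part 2
  have part2 : (Matrix.of fun k j => q k * T j k / T.mulVec q j).mulVec (T.mulVec q) = q := by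
    funext k
    rw [happly]
    simp only [Matrix.of_apply]
    have h2 : ∀ j, q k * T j k / T.mulVec q j * T.mulVec q j = q k * T j k := by
      intro j; exact div_mul_cancel₀ _ (hTq j).ne'
    rw [Finset.sum_congr rfl fun j _ => h2 j, ← Finset.mul_sum, hTcol k, mul_one]
  refine ⟨part1, part2, ?_⟩
  -- Part 3
  set x : Fin n' → ℝ := fun j => T.mulVec p j / T.mulVec q j with hx
  set s : Fin n → ℝ := fun k => ∑ j, T j k * x j with hs
  have hr : ∀ k, (Matrix.of (fun k j => q k * T j k / T.mulVec q j)).mulVec (T.mulVec p) k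
      = q k * s k := by
    intro k
    rw [happly]
    simp only [Matrix.of_apply, hs, Finset.mul_sum]
    refine Finset.sum_congr rfl fun j _ => ?_
    have hxj : x j = T.mulVec p j / T.mulVec q j := rfl
    rw [hxj]
    have hA := (hTq j).ne'
    field_simp
  -- Jensen inequality pointwise
  have jensen : ∀ k, 0 < p k → ∑ j, T j k * Real.log (x j) ≤ Real.log (s k) ∧ 0 < s k := by
    intro k hpk
    set S : Finset (Fin n') := Finset.univ.filter (fun j => 0 < T.mulVec p j) with hS
    have hoff : ∀ j, j ∉ S → T j k = 0 := by
      intro j hj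
      have h0 : T.mulVec p j = 0 := by
        rcases (hTp_nonneg j).lt_or_eq with h | h
        · exact absurd (Finset.mem_filter.mpr ⟨Finset.mem_univ j, h⟩) hj
        · exact h.symm
      rw [hTpv] at h0
      have := (Finset.sum_eq_zero_iff_of_nonneg
        (fun k' _ => mul_nonneg (hTnn j k') (hp k'))).mp h0 k (Finset.mem_univ k)
      rcases mul_eq_zero.mp this with h | h
      · exact h
      · exact absurd h hpk.ne'
    have hxS : ∀ j ∈ S, x j ∈ Set.Ioi (0:ℝ) := by
      intro j hj
      exact div_pos (Finset.mem_filter.mp hj).2 (hTq j)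
    have hsumS : ∑ j ∈ S, T j k = 1 := by
      rw [← hTcol k]
      exact (Finset.sum_subset (Finset.subset_univ S)
        (fun j _ hj => hoff j hj)).symm ▸ rfl
    have hsS : s k = ∑ j ∈ S, T j k * x j := by
      rw [hs]
      exact (Finset.sum_subset (Finset.subset_univ S)
        (fun j _ hj => by rw [hoff j hj, zero_mul])).symm
    have hcS : ∑ j, T j k * Real.log (x j) = ∑ j ∈ S, T j k * Real.log (x j) := by
      exact (Finset.sum_subset (Finset.subset_univ S)
        (fun j _ hj => by rw [hoff j hj, zero_mul])).symm
    have hjen := (strictConcaveOn_log_Ioi.concaveOn).le_map_sum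
      (t := S) (w := fun j => T j k) (p := x)
      (fun j _ => hTnn j k) hsumS hxS
    simp only [smul_eq_mul] at hjen
    constructor
    · rw [hcS, hsS]; exact hjen
    · -- s k > 0
      have : ∃ j ∈ S, 0 < T j k := by
        by_contra h
        push_neg at h
        have : ∑ j ∈ S, T j k = 0 :=
          Finset.sum_eq_zero fun j hj => le_antisymm (h j hj) (hTnn j k)
        rw [hsumS] at this; norm_num at this
      obtain ⟨j0, hj0S, hj0⟩ := this
      rw [hsS]
      refine Finset.sum_pos' (fun j hj => mul_nonneg (hTnn j k) (hxS j hj).le)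
        ⟨j0, hj0S, mul_pos hj0 (hxS j0 hj0S)⟩
  -- rewrite relEnt (Tp) (Tq) as double sum
  have hswap : relEnt (T.mulVec p) (T.mulVec q)
      = ∑ k, p k * ∑ j, T j k * Real.log (x j) := by
    unfold relEnt
    have h1 : ∀ j, T.mulVec p j * Real.log (T.mulVec p j / T.mulVec q j)
        = ∑ k, T j k * p k * Real.log (x j) := by
      intro j
      have hxj : Real.log (T.mulVec p j / T.mulVec q j) = Real.log (x j) := rfl
      rw [hxj, ← Finset.sum_mul, ← hTpv]
    simp_rw [h1]
    rw [Finset.sum_comm]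
    refine Finset.sum_congr rfl fun k _ => ?_
    rw [Finset.mul_sum]
    exact Finset.sum_congr rfl fun j _ => by ring
  rw [hswap]
  unfold relEnt
  simp_rw [hr]
  rw [le_sub_iff_add_le, ← Finset.sum_add_distrib]
  apply Finset.sum_le_sum
  intro k _
  rcases (hp k).lt_or_eq with hpk | hpk
  · obtain ⟨hjen, hsk⟩ := jensen k hpk
    have hlog : Real.log (p k / (q k * s k))
        = Real.log (p k / q k) - Real.log (s k) := by
      rw [Real.log_div hpk.ne' (mul_pos (hq k) hsk).ne',
        Real.log_mul (hq k).ne' hsk.ne', Real.log_div hpk.ne' (hq k).ne']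
      ring
    rw [hlog]
    have := mul_le_mul_of_nonneg_left hjen hpk.le
    nlinarith
  · rw [← hpk]
    simp
end
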